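/- Let a₀, a₁, a₂, a₃, a₄ be nonzero real numbers with a₁·a₄ > 0, and define G(x,y) = a₀y² − a₁xy² − a₂xy − a₃x² − a₄x³. Then the origin (0,0) is the unique singular point of the real cubic curve {(x,y) ∈ ℝ² : G(x,y) = 0}: the only pair (x,y) ∈ ℝ² satisfying simultaneously G(x,y) = 0, ∂G/∂x(x,y) = 0 and ∂G/∂y(x,y) = 0 is (x,y) = (0,0). -/
import Mathlib


/-- The cubic polynomial `G(x,y) = a₀y² − a₁xy² − a₂xy − a₃x² − a₄x³`. -/
def cubicG (a₀ a₁ a₂ a₃ a₄ x y : ℝ) : ℝ :=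
  a₀ * y ^ 2 - a₁ * x * y ^ 2 - a₂ * x * y - a₃ * x ^ 2 - a₄ * x ^ 3

/-- `∂G/∂x = −a₁y² − a₂y − 2a₃x − 3a₄x²`. -/
def cubicGx (a₀ a₁ a₂ a₃ a₄ x y : ℝ) : ℝ :=
  -a₁ * y ^ 2 - a₂ * y - 2 * a₃ * x - 3 * a₄ * x ^ 2

/-- `∂G/∂y = 2a₀y − 2a₁xy − a₂x`. -/
def cubicGy (a₀ a₁ a₂ a₃ a₄ x y : ℝ) : ℝ :=
  2 * a₀ * y - 2 * a₁ * x * y - a₂ * x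

/-- For nonzero `a₀,…,a₄` with `a₁a₄ > 0`, the origin is the unique singular
point of the cubic curve `G = 0`. -/
theorem stmt_18 (a₀ a₁ a₂ a₃ a₄ : ℝ)
    (h₀ : a₀ ≠ 0) (h₁ : a₁ ≠ 0) (h₂ : a₂ ≠ 0) (h₃ : a₃ ≠ 0) (h₄ : a₄ ≠ 0)
    (h : a₁ * a₄ > 0) (x y : ℝ) :
    (cubicG a₀ a₁ a₂ a₃ a₄ x y = 0 ∧ cubicGx a₀ a₁ a₂ a₃ a₄ x y = 0 ∧
      cubicGy a₀ a₁ a₂ a₃ a₄ x y = 0) ↔ (x, y) = ((0 : ℝ), (0 : ℝ)) := by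
  constructor
  · rintro ⟨hG, hGx, hGy⟩
    simp only [cubicG, cubicGx, cubicGy] at hG hGx hGy
    rcases eq_or_ne x 0 with hx | hx
    · subst hx
      have hy : y = 0 := by
        have : 2 * a₀ * y = 0 := by linarith
        have h2 : (2 : ℝ) * a₀ ≠ 0 := by positivity
        exact (mul_eq_zero.mp this).resolve_left h2
      simp [hy]
    · exfalso
      have hx3 : x * (a₂ * y + 2 * a₃ * x + 2 * a₄ * x ^ 2) = 0 := by
        linear_combination y * hGy - 2 * hG
      have h5 : a₂ * y + 2 * a₃ * x + 2 * a₄ * x ^ 2 = 0 :=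
        (mul_eq_zero.mp hx3).resolve_left hx
      have key : a₁ * y ^ 2 + a₄ * x ^ 2 = 0 := by linear_combination -hGx - h5
      have key2 : a₁ ^ 2 * y ^ 2 + a₁ * a₄ * x ^ 2 = 0 := by linear_combination a₁ * key
      have hx2 : 0 < x ^ 2 := by positivity
      nlinarith [sq_nonneg (a₁ * y), mul_pos h hx2]
  · rintro hxy
    rw [Prod.mk.injEq] at hxy
    obtain ⟨hx, hy⟩ := hxy
    subst hx; subst hy
    simp [cubicG, cubicGx, cubicGy]
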